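/- Let q ≥ 2, let n and d be positive integers with 0 < w < n, and suppose there exists an (n,d)_q-code of size M, i.e., a subset C ⊆ (ZMod q)^n with |C| = M in which any two distinct elements are at Hamming distance at least d. Then there exists a set D ⊆ (ZMod 2)^{n+1} of binary words of length n+1, each of Hamming weight exactly w, such that any two distinct elements of D are at Hamming distance at least 2·⌊(d+1)/2⌋ and q^n · |D| ≥ M · (C(n,w-1) + C(n,w)), where C(n,k) denotes the binomial coefficient; equivalently, A(n+1, 2·⌊(d+1)/2⌋, w) ≥ ⌈M · (C(n,w-1) + C(n,w)) / q^n⌉. -/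

import Mathlib

/-!
Send a binary word of length `n + 1` to the `q`-ary word of length `n` obtained by deleting its
first letter and reading `0, 1` in `ZMod q`. Averaging over the `q ^ n` translates of `C`, some
translate contains the images of at least `M · C(n+1, w) / q ^ n` words of weight `w`, and
`C(n+1, w) = C(n, w-1) + C(n, w)`. Two words of equal weight are at even distance, so two distinct
ones cannot differ in the deleted letter only; their images are therefore distinct codewords, at
distance at least `d`, and the even distance between the words is at least `2⌈d/2⌉`.
-/

open Finset Function

lemma ZMod.ite_ne_zero_one_zero (a : ZMod 2) : (if a ≠ 0 then 1 else 0) = a := by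
  decide +revert

lemma ZMod.natCast_hammingNorm_eq_sum {ι : Type*} [Fintype ι] (x : ι → ZMod 2) :
    (hammingNorm x : ZMod 2) = ∑ i, x i := by
  simp only [hammingNorm, card_filter, Nat.cast_sum, Nat.cast_ite, Nat.cast_one, Nat.cast_zero,
    ZMod.ite_ne_zero_one_zero]

lemma even_hammingDist_of_hammingNorm_eq {ι : Type*} [Fintype ι] {x y : ι → ZMod 2}
    (h : hammingNorm x = hammingNorm y) : Even (hammingDist x y) := by
  rw [← ZMod.natCast_eq_zero_iff_even, hammingDist_eq_hammingNorm,
    ZMod.natCast_hammingNorm_eq_sum]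
  simp only [Pi.add_apply, Pi.neg_apply, sum_add_distrib, sum_neg_distrib]
  rw [← ZMod.natCast_hammingNorm_eq_sum, ← ZMod.natCast_hammingNorm_eq_sum, h, neg_add_cancel]

lemma card_filter_hammingNorm_eq {ι : Type*} [Fintype ι] [DecidableEq ι] (w : ℕ) :
    #{x : ι → ZMod 2 | hammingNorm x = w} = (Fintype.card ι).choose w := by
  rw [← card_univ, ← card_powersetCard]
  refine card_nbij' (fun x => ({i | x i ≠ 0} : Finset ι)) (fun s i => if i ∈ s then 1 else 0)
    ?_ ?_ ?_ ?_
  · intro x hx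
    simpa [mem_powersetCard, hammingNorm] using hx
  · intro s hs
    simp only [mem_coe, mem_powersetCard] at hs
    simp [hammingNorm, ← hs.2]
  · intro x _
    ext i; simp only [mem_filter, mem_univ, true_and, ZMod.ite_ne_zero_one_zero]
  · intro s _
    ext i; by_cases h : i ∈ s <;> simp [h]

lemma hammingDist_eq_hammingDist_tail_add {n : ℕ} {β : Fin (n + 1) → Type*}
    [∀ i, DecidableEq (β i)] (x y : ∀ i, β i) :
    hammingDist x y = hammingDist (Fin.tail x) (Fin.tail y) + if x 0 = y 0 then 0 else 1 := by
  rw [hammingDist, hammingDist, card_filter, card_filter, Fin.sum_univ_succ, add_comm]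
  congr 1
  by_cases h : x 0 = y 0 <;> simp [h]

lemma ZMod.natCast_val_injective_of_le {m q : ℕ} [NeZero m] (hmq : m ≤ q) :
    Injective (fun a : ZMod m => (a.val : ZMod q)) := by
  intro a b h
  have hv := congrArg ZMod.val h
  simp only [ZMod.val_natCast_of_lt (a.val_lt.trans_le hmq),
    ZMod.val_natCast_of_lt (b.val_lt.trans_le hmq)] at hv
  exact ZMod.val_injective m hv

lemma Finset.card_filter_sub_mem {G : Type*} [AddCommGroup G] [Fintype G] [DecidableEq G]
    (a : G) (C : Finset G) : #{z | a - z ∈ C} = #C :=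
  card_nbij' (a - ·) (a - ·) (fun z hz => by simpa using hz) (fun c hc => by simpa using hc)
    (fun z _ => by simp) (fun c _ => by simp)

lemma Finset.sum_card_filter_sub_mem {α G : Type*} [AddCommGroup G] [Fintype G] [DecidableEq G]
    (B : Finset α) (f : α → G) (C : Finset G) :
    ∑ z, #{u ∈ B | f u - z ∈ C} = #B * #C := by
  simp only [card_filter]
  rw [sum_comm]
  simp only [← card_filter, card_filter_sub_mem, sum_const, smul_eq_mul]

lemma Finset.exists_card_mul_card_le_card_mul_card_filter_sub_mem {α G : Type*} [AddCommGroup G]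
    [Fintype G] [DecidableEq G] (B : Finset α) (f : α → G) (C : Finset G) :
    ∃ z, #B * #C ≤ Fintype.card G * #{u ∈ B | f u - z ∈ C} := by
  obtain ⟨z, -, hz⟩ := exists_le_of_sum_le (s := univ) (f := fun _ => #B * #C)
    (g := fun z => Fintype.card G * #{u ∈ B | f u - z ∈ C}) univ_nonempty
    (by simp [← mul_sum, sum_card_filter_sub_mem])
  exact ⟨z, hz⟩

lemma hammingDist_sub_right {ι : Type*} [Fintype ι] {β : ι → Type*} [∀ i, AddGroup (β i)]
    [∀ i, DecidableEq (β i)] (x y z : ∀ i, β i) :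
    hammingDist (x - z) (y - z) = hammingDist x y :=
  hammingDist_comp (fun i a => a - z i) fun _ => sub_left_injective

lemma two_mul_succ_div_two_le_hammingDist_of_tail_mem {α : Type*} [DecidableEq α] {n d : ℕ}
    {e : ZMod 2 → α} (he : Injective e) {C : Set (Fin n → α)}
    (hC : ∀ c ∈ C, ∀ c' ∈ C, c ≠ c' → d ≤ hammingDist c c')
    {x y : Fin (n + 1) → ZMod 2} (hxy : x ≠ y) (hw : hammingNorm x = hammingNorm y)
    (hx : (fun i => e (x i.succ)) ∈ C) (hy : (fun i => e (y i.succ)) ∈ C) :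
    2 * ((d + 1) / 2) ≤ hammingDist x y := by
  obtain ⟨k, hk⟩ := even_hammingDist_of_hammingNorm_eq hw
  have hsplit := hammingDist_eq_hammingDist_tail_add x y
  have hpos : 0 < hammingDist x y := hammingDist_pos.2 hxy
  have htail : Fin.tail x ≠ Fin.tail y := by
    intro h
    rw [h, hammingDist_self] at hsplit
    split_ifs at hsplit <;> omega
  have hd : d ≤ hammingDist (Fin.tail x) (Fin.tail y) := by
    rw [← hammingDist_comp (fun _ => e) fun _ => he]
    exact hC _ hx _ hy fun h => htail (funext fun i => he (congrFun h i))
  split_ifs at hsplit <;> omega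

theorem stmt_8_general (q n d M w : ℕ) (hq : 2 ≤ q) (hw : 0 < w)
    (C : Set (Fin n → ZMod q)) (hM : C.ncard = M)
    (hC : ∀ x ∈ C, ∀ y ∈ C, x ≠ y → d ≤ hammingDist x y) :
    ∃ D : Set (Fin (n + 1) → ZMod 2),
      D.Finite ∧
      (∀ x ∈ D, hammingNorm x = w) ∧
      (∀ x ∈ D, ∀ y ∈ D, x ≠ y → 2 * ((d + 1) / 2) ≤ hammingDist x y) ∧
      M * (n.choose (w - 1) + n.choose w) ≤ q ^ n * D.ncard := by
  have : NeZero q := ⟨by omega⟩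
  set e : ZMod 2 → ZMod q := fun a => (a.val : ZMod q)
  set B : Finset (Fin (n + 1) → ZMod 2) := {x | hammingNorm x = w}
  set Cfin := C.toFinite.toFinset
  obtain ⟨z, hz⟩ := exists_card_mul_card_le_card_mul_card_filter_sub_mem B
    (fun x i => e (x i.succ)) Cfin
  have hB : #B = n.choose (w - 1) + n.choose w := by
    obtain ⟨k, rfl⟩ := Nat.exists_eq_succ_of_ne_zero hw.ne'
    rw [card_filter_hammingNorm_eq, Fintype.card_fin, Nat.choose_succ_succ, Nat.succ_sub_one]
  have hCz : ∀ c ∈ {c | c - z ∈ C}, ∀ c' ∈ {c | c - z ∈ C}, c ≠ c' → d ≤ hammingDist c c' :=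
    fun c hc c' hc' hne => hammingDist_sub_right c c' z ▸ hC _ hc _ hc' (sub_left_injective.ne hne)
  set D : Finset (Fin (n + 1) → ZMod 2) := {x ∈ B | (fun i => e (x i.succ)) - z ∈ Cfin}
  have hD : ∀ x ∈ D, hammingNorm x = w ∧ (fun i => e (x i.succ)) ∈ {c | c - z ∈ C} := by
    intro x hx
    simpa [D, B, Cfin] using hx
  refine ⟨D, D.finite_toSet, fun x hx => (hD x hx).1, fun x hx y hy hxy => ?_, ?_⟩
  · exact two_mul_succ_div_two_le_hammingDist_of_tail_mem
      (ZMod.natCast_val_injective_of_le hq) hCz hxy ((hD x hx).1.trans (hD y hy).1.symm)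
      (hD x hx).2 (hD y hy).2
  · rw [Set.ncard_coe_finset, ← hM, Set.ncard_eq_toFinset_card C, ← hB, mul_comm]
    rwa [Fintype.card_fun, ZMod.card, Fintype.card_fin] at hz

/-- Theorem 2.3(ii): if there exists an `(n,d)_q`-code of size `M` and
`0 < w < n`, then there exists a binary constant-weight code
`D ⊆ (ZMod 2)^{n+1}` of weight `w` and minimum distance at least
`2⌊(d+1)/2⌋` with `q^n · |D| ≥ M · (C(n,w-1) + C(n,w))`, i.e.
`A(n+1, 2⌊(d+1)/2⌋, w) ≥ ⌈M·(C(n,w-1)+C(n,w))/q^n⌉`. -/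
theorem stmt_8 (q n d M w : ℕ) (hq : 2 ≤ q) (hn : 0 < n) (hd : 0 < d)
    (hw : 0 < w) (hwn : w < n)
    (C : Set (Fin n → ZMod q)) (hCfin : C.Finite) (hM : C.ncard = M)
    (hC : ∀ x ∈ C, ∀ y ∈ C, x ≠ y → d ≤ hammingDist x y) :
    ∃ D : Set (Fin (n + 1) → ZMod 2),
      D.Finite ∧
      (∀ x ∈ D, hammingNorm x = w) ∧
      (∀ x ∈ D, ∀ y ∈ D, x ≠ y → 2 * ((d + 1) / 2) ≤ hammingDist x y) ∧
      M * (n.choose (w - 1) + n.choose w) ≤ q ^ n * D.ncard :=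
  stmt_8_general q n d M w hq hw C hM hC
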